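/- Let X₁, ..., Xₙ be i.i.d. random vectors in ℝ^p whose last coordinate X_i(p) satisfies P(X_i(p) = 0) = 1 − 1/γ for some γ > 1, independent of the other coordinates, and let Y₁, ..., Yₙ be i.i.d. centered Gaussian vectors with E[Y_iY_iᵀ] = E[X_iX_iᵀ], where the last coordinate of X has a nondegenerate symmetric distribution so that Var(X_i(p)) > 0. Then μ(n^{−1/2}Σ X_i, n^{−1/2}Σ Y_i) ≥ (1/2)(1 − 1/γ)ⁿ. -/

import Mathlib

/-
On the event that every `X i j₀` vanishes, which has probability `(1 - 1/γ)^n` by independence,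
the normalized sum of the `X i` has `j₀`-th coordinate `0`. The `j₀`-th coordinate of the
normalized Gaussian sum has no atom, since one of its summands is a nondegenerate Gaussian
independent of the others. Finally, the rectangle distance detects atoms: comparing the rectangles
whose `j₀`-th edge ends at `c` and at `c - 1/(k+1)`, with all other edges ending at `k`, and letting
`k → ∞`, twice the rectangle distance bounds the difference of the masses at `c`.
-/

open MeasureTheory ProbabilityTheory

/-- Rectangle (Kolmogorov-type) distance between the laws of two random vectors:
`μ(U,V) = sup_r |P(U ⪯ r) - Q(V ⪯ r)|` with `⪯` coordinatewise. -/
noncomputable def rectDist {Ω Ω' : Type*} [MeasurableSpace Ω] [MeasurableSpace Ω']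
    (P : Measure Ω) (Q : Measure Ω') {p : ℕ}
    (U : Ω → (Fin p → ℝ)) (V : Ω' → (Fin p → ℝ)) : ℝ :=
  ⨆ r : Fin p → ℝ,
    |(P {ω | ∀ j, U ω j ≤ r j}).toReal - (Q {ω | ∀ j, V ω j ≤ r j}).toReal|

/-- Third directional derivative `⟨∇³f(x), h⊗h⊗h⟩ = d³/dt³ f(x+th)|_{t=0}`. -/
noncomputable def thirdDirDeriv {p : ℕ} (f : (Fin p → ℝ) → ℝ) (x h : Fin p → ℝ) : ℝ :=
  iteratedDeriv 3 (fun t : ℝ => f (x + t • h)) 0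

/-- Ideal metric of order 3: sup over `f` with `‖∇³f(x)‖₁ ≤ 1` of `|E f(U) - E f(V)|`.
(Recall that on `Fin p → ℝ` the default norm `‖·‖` is the sup norm, so
`∀ h, ‖h‖ ≤ 1 → |thirdDirDeriv f x h| ≤ 1` says exactly `‖∇³f(x)‖₁ ≤ 1`.) -/
noncomputable def zeta3 {Ω : Type*} [MeasurableSpace Ω] (P : Measure Ω) {p : ℕ}
    (U V : Ω → (Fin p → ℝ)) : ℝ :=
  sSup {d : ℝ | ∃ f : (Fin p → ℝ) → ℝ,
    (∀ x h, ‖h‖ ≤ 1 → |thirdDirDeriv f x h| ≤ 1) ∧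
    d = |∫ ω, f (U ω) ∂P - ∫ ω, f (V ω) ∂P|}

/-- Total variation measure `|μ - ν|` of the difference of two finite measures. -/
noncomputable def tvDiff {α : Type*} [MeasurableSpace α] (μ ν : Measure α) : Measure α :=
  (μ - ν) + (ν - μ)

/-- Pseudo-moment of order `k`: `ν_k(U,V) = ∫ ‖x‖_∞^k |P_U - P_V|(dx)`. -/
noncomputable def pseudoMoment {Ω : Type*} [MeasurableSpace Ω] (P : Measure Ω) {p : ℕ}
    (k : ℕ) (U V : Ω → (Fin p → ℝ)) : ℝ :=
  ∫ x, ‖x‖ ^ k ∂(tvDiff (P.map U) (P.map V))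

/-- A measure on `ℝ^p` is centered Gaussian with covariance matrix `S` iff every linear
functional pushes it to a one-dimensional centered Gaussian with the right variance. -/
def IsCenteredGaussian {p : ℕ} (μ : Measure (Fin p → ℝ)) (S : Matrix (Fin p) (Fin p) ℝ) : Prop :=
  ∀ l : Fin p → ℝ, μ.map (fun x => ∑ j, l j * x j) =
    ProbabilityTheory.gaussianReal 0 (Real.toNNReal (dotProduct l (S.mulVec l)))

/-- Standard Gaussian measure `N(0, I_p)` on `ℝ^p`. -/
noncomputable def stdGaussianPi (p : ℕ) : Measure (Fin p → ℝ) :=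
  Measure.pi fun _ => ProbabilityTheory.gaussianReal 0 1

/-- `log(ep)`. -/
noncomputable def logep (p : ℕ) : ℝ := Real.log (Real.exp 1 * p)

open Filter Topology Set

lemma iUnion_setOf_le_sub_one_div_eq {Ω : Type*} (f : Ω → ℝ) (c : ℝ) :
    ⋃ k : ℕ, {ω | f ω ≤ c - 1 / (k + 1)} = {ω | f ω < c} := by
  ext ω
  simp only [mem_iUnion, mem_ofPred_eq]
  constructor
  · rintro ⟨k, hk⟩
    exact hk.trans_lt (sub_lt_self c Nat.one_div_pos_of_nat)
  · intro h
    obtain ⟨k, hk⟩ := exists_nat_one_div_lt (sub_pos.2 h)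
    exact ⟨k, by linarith⟩

lemma tendsto_measureReal_setOf_forall_le_update {Ω : Type*} [MeasurableSpace Ω]
    (P : Measure Ω) [IsFiniteMeasure P] {p : ℕ} (W : Ω → Fin p → ℝ) (j : Fin p) {b : ℕ → ℝ}
    (hb : Monotone b) :
    Tendsto (fun k : ℕ => P.real {ω | ∀ i, W ω i ≤ Function.update (fun _ => (k : ℝ)) j (b k) i})
      atTop (𝓝 (P.real (⋃ k, {ω | W ω j ≤ b k}))) := by
  have hmono : Monotone fun k : ℕ =>
      {ω | ∀ i, W ω i ≤ Function.update (fun _ => (k : ℝ)) j (b k) i} := by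
    intro k l hkl ω hω i
    rcases eq_or_ne i j with rfl | hi
    · simpa using (by simpa using hω i : W ω i ≤ b k).trans (hb hkl)
    · simpa [hi] using (by simpa [hi] using hω i : W ω i ≤ k).trans (Nat.cast_le.2 hkl)
  suffices hunion : ⋃ k : ℕ, {ω | ∀ i, W ω i ≤ Function.update (fun _ => (k : ℝ)) j (b k) i} =
      ⋃ k, {ω | W ω j ≤ b k} by
    rw [← hunion]
    exact (ENNReal.tendsto_toReal (measure_ne_top P _)).comp (tendsto_measure_iUnion_atTop hmono)
  ext ω
  simp only [mem_iUnion, mem_ofPred_eq]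
  constructor
  · rintro ⟨k, hk⟩
    exact ⟨k, by simpa using hk j⟩
  · rintro ⟨k, hk⟩
    obtain ⟨m, hmk, hm⟩ := ((eventually_ge_atTop k).and (eventually_all.2 fun i =>
      tendsto_natCast_atTop_atTop.eventually_ge_atTop (W ω i))).exists
    refine ⟨m, fun i => ?_⟩
    rcases eq_or_ne i j with rfl | hi
    · simpa using hk.trans (hb hmk)
    · simpa [hi] using hm i

section RectDist

variable {Ω Ω' : Type*} [MeasurableSpace Ω] [MeasurableSpace Ω'] {P : Measure Ω} {Q : Measure Ω'}
  [IsFiniteMeasure P] [IsFiniteMeasure Q] {p : ℕ} {U : Ω → Fin p → ℝ} {V : Ω' → Fin p → ℝ}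

lemma abs_sub_le_rectDist (r : Fin p → ℝ) :
    |P.real {ω | ∀ j, U ω j ≤ r j} - Q.real {ω | ∀ j, V ω j ≤ r j}| ≤ rectDist P Q U V := by
  refine le_ciSup (f := fun r : Fin p → ℝ =>
    |P.real {ω | ∀ j, U ω j ≤ r j} - Q.real {ω | ∀ j, V ω j ≤ r j}|)
    ⟨P.real univ + Q.real univ, ?_⟩ r
  rintro _ ⟨r, rfl⟩
  have hP := measureReal_mono (μ := P) (subset_univ {ω | ∀ j, U ω j ≤ r j})
  have hQ := measureReal_mono (μ := Q) (subset_univ {ω | ∀ j, V ω j ≤ r j})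
  rw [abs_sub_le_iff]
  constructor <;> linarith [measureReal_nonneg (μ := P) (s := {ω | ∀ j, U ω j ≤ r j}),
    measureReal_nonneg (μ := Q) (s := {ω | ∀ j, V ω j ≤ r j})]

lemma sub_sub_sub_le_two_mul_rectDist (r r' : Fin p → ℝ) :
    (P.real {ω | ∀ j, U ω j ≤ r j} - P.real {ω | ∀ j, U ω j ≤ r' j}) -
      (Q.real {ω | ∀ j, V ω j ≤ r j} - Q.real {ω | ∀ j, V ω j ≤ r' j}) ≤
      2 * rectDist P Q U V := by
  have h := abs_le.1 (abs_sub_le_rectDist (P := P) (Q := Q) (U := U) (V := V) r)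
  have h' := abs_le.1 (abs_sub_le_rectDist (P := P) (Q := Q) (U := U) (V := V) r')
  linarith [h.2, h'.1]

lemma measureReal_eval_eq_sub_le_two_mul_rectDist (hU : Measurable U) (j : Fin p) (c : ℝ) :
    P.real {ω | U ω j = c} - Q.real {ω | V ω j = c} ≤ 2 * rectDist P Q U V := by
  have hb : Monotone fun k : ℕ => c - 1 / ((k : ℝ) + 1) := fun k l hkl => by
    dsimp only
    gcongr
  have hc : Monotone fun _ : ℕ => c := monotone_const
  have key := le_of_tendsto'
    (((tendsto_measureReal_setOf_forall_le_update P U j hc).sub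
        (tendsto_measureReal_setOf_forall_le_update P U j hb)).sub
      ((tendsto_measureReal_setOf_forall_le_update Q V j hc).sub
        (tendsto_measureReal_setOf_forall_le_update Q V j hb)))
    fun k => by exact sub_sub_sub_le_two_mul_rectDist (U := U) (V := V) _ _
  simp only [iUnion_const, iUnion_setOf_le_sub_one_div_eq] at key
  have hP : P.real {ω | U ω j ≤ c} = P.real {ω | U ω j < c} + P.real {ω | U ω j = c} := by
    rw [← measureReal_union]
    · congr 1
      ext ω
      simp [le_iff_lt_or_eq]
    · exact Set.disjoint_left.2 fun ω h h' => (ne_of_lt h) h'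
    · exact measurableSet_eq_fun (measurable_pi_apply j |>.comp hU) measurable_const
  have hQ : Q.real {ω | V ω j ≤ c} ≤ Q.real {ω | V ω j < c} + Q.real {ω | V ω j = c} := by
    refine (measureReal_mono fun ω h => ?_).trans (measureReal_union_le _ _)
    simpa [le_iff_lt_or_eq] using h
  linarith

end RectDist

lemma IsCenteredGaussian.map_eval {p : ℕ} {μ : Measure (Fin p → ℝ)}
    {S : Matrix (Fin p) (Fin p) ℝ} (h : IsCenteredGaussian μ S) (j : Fin p) :
    μ.map (fun x => x j) = gaussianReal 0 (S j j).toNNReal := by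
  simpa [Pi.single_apply, ite_mul] using h (Pi.single j 1)

namespace ProbabilityTheory

lemma IndepFun.measure_add_eq_zero_of_nullSingletonClass {Ω : Type*} [MeasurableSpace Ω]
    {P : Measure Ω} [IsFiniteMeasure P] {R W : Ω → ℝ} (hR : Measurable R) (hW : Measurable W)
    (hRW : IndepFun R W P) (hWatom : NullSingletonClass (P.map W)) (c : ℝ) :
    P {ω | R ω + W ω = c} = 0 := by
  have hset : MeasurableSet {q : ℝ × ℝ | q.1 + q.2 = c} :=
    measurableSet_eq_fun (measurable_fst.add measurable_snd) measurable_const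
  have hslice (r : ℝ) : Prod.mk r ⁻¹' {q : ℝ × ℝ | q.1 + q.2 = c} = {c - r} := by
    ext w
    simp only [mem_preimage, mem_ofPred_eq, mem_singleton_iff]
    constructor <;> intro h <;> linarith
  rw [show {ω | R ω + W ω = c} = (fun ω => (R ω, W ω)) ⁻¹' {q : ℝ × ℝ | q.1 + q.2 = c} from rfl,
    ← Measure.map_apply (hR.prodMk hW) hset,
    (indepFun_iff_map_prod_eq_prod_map_map hR.aemeasurable hW.aemeasurable).1 hRW,
    Measure.prod_apply hset]
  simp [hslice]

lemma iIndepFun.measure_sum_eq_zero_of_nullSingletonClass {Ω ι : Type*} [MeasurableSpace Ω]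
    {P : Measure Ω} [IsFiniteMeasure P] [Fintype ι] {W : ι → Ω → ℝ}
    (hWm : ∀ i, Measurable (W i)) (hW : iIndepFun W P) (i₀ : ι)
    (hatom : NullSingletonClass (P.map (W i₀))) (c : ℝ) :
    P {ω | ∑ i, W i ω = c} = 0 := by
  classical
  have hsplit (ω : Ω) : ∑ i, W i ω = (∑ i ∈ Finset.univ.erase i₀, W i) ω + W i₀ ω := by
    rw [Finset.sum_apply, Finset.sum_erase_add _ _ (Finset.mem_univ i₀)]
  simp only [hsplit]
  exact (hW.indepFun_finsetSum_of_notMem hWm (Finset.notMem_erase i₀ _))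
    |>.measure_add_eq_zero_of_nullSingletonClass (by fun_prop)
      (hWm i₀) hatom c

end ProbabilityTheory

lemma measure_smul_sum_eval_eq_zero_of_isCenteredGaussian {Ω ι : Type*} [MeasurableSpace Ω]
    {P : Measure Ω} [IsFiniteMeasure P] [Fintype ι] [Nonempty ι] {p : ℕ}
    {Y : ι → Ω → Fin p → ℝ} (hYm : ∀ i, Measurable (Y i)) (hY : iIndepFun Y P)
    {S : Matrix (Fin p) (Fin p) ℝ} (hYgauss : ∀ i, IsCenteredGaussian (P.map (Y i)) S)
    {j : Fin p} (hSj : 0 < S j j) {a : ℝ} (ha : a ≠ 0) :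
    P {ω | (a • ∑ i, Y i ω) j = 0} = 0 := by
  obtain ⟨i₀⟩ := ‹Nonempty ι›
  have hlaw : P.map (fun ω => Y i₀ ω j) = gaussianReal 0 (S j j).toNNReal := by
    rw [← (hYgauss i₀).map_eval j, Measure.map_map (measurable_pi_apply j) (hYm i₀)]
    rfl
  have hsum := (hY.comp _ fun _ => measurable_pi_apply j).measure_sum_eq_zero_of_nullSingletonClass
    (fun i => (hYm i).eval) i₀ (hlaw ▸ nullSingletonClass_gaussianReal (by simpa using hSj)) 0
  simpa [Finset.sum_apply, ha] using hsum

theorem atom_lower_bound_general {Ω : Type*} [MeasurableSpace Ω] (P : Measure Ω)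
    [IsProbabilityMeasure P] {p n : ℕ} (hn : 0 < n) (j₀ : Fin p)
    (X Y : Fin n → Ω → (Fin p → ℝ)) (γ : ℝ) (hγ : 1 < γ)
    (hXm : ∀ i, Measurable (X i)) (hYm : ∀ i, Measurable (Y i))
    (hXindep : iIndepFun X P)
    (hYindep : iIndepFun Y P)
    (hatom : ∀ i, P {ω | X i ω j₀ = 0} = ENNReal.ofReal (1 - 1 / γ))
    (S : Matrix (Fin p) (Fin p) ℝ)
    (hYgauss : ∀ i, IsCenteredGaussian (P.map (Y i)) S)
    (hSj₀ : 0 < S j₀ j₀) :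
    (1 / 2) * (1 - 1 / γ) ^ n ≤
      rectDist P P (fun ω => (Real.sqrt n)⁻¹ • ∑ i, X i ω)
        (fun ω => (Real.sqrt n)⁻¹ • ∑ i, Y i ω) := by
  have : NeZero n := ⟨hn.ne'⟩
  have hall_zero : P.real (⋂ i, {ω | X i ω j₀ = 0}) = (1 - 1 / γ) ^ n := by
    rw [measureReal_def, hXindep.meas_iInter (s := fun i => {ω | X i ω j₀ = 0}) fun i =>
      ⟨{x | x j₀ = 0}, measurableSet_eq_fun (measurable_pi_apply j₀) measurable_const, rfl⟩]
    have hγ' : 0 ≤ 1 - 1 / γ := sub_nonneg.2 ((div_le_one (by linarith)).2 hγ.le)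
    simp only [hatom, Finset.prod_const, Finset.card_univ, Fintype.card_fin, ENNReal.toReal_pow,
      ENNReal.toReal_ofReal hγ']
  have hX : (1 - 1 / γ) ^ n ≤ P.real {ω | ((Real.sqrt n)⁻¹ • ∑ i, X i ω) j₀ = 0} :=
    hall_zero ▸ measureReal_mono fun ω hω => by simp_all [Finset.sum_apply]
  have hY : P.real {ω | ((Real.sqrt n)⁻¹ • ∑ i, Y i ω) j₀ = 0} = 0 := by
    rw [measureReal_eq_zero_iff]
    exact measure_smul_sum_eval_eq_zero_of_isCenteredGaussian hYm hYindep hYgauss hSj₀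
      (by positivity)
  have hXm' : Measurable fun ω => (Real.sqrt n)⁻¹ • ∑ i, X i ω := by fun_prop
  linarith [measureReal_eval_eq_sub_le_two_mul_rectDist (P := P) (Q := P)
    (V := fun ω => (Real.sqrt n)⁻¹ • ∑ i, Y i ω) hXm' j₀ 0]

/-- lower bound via an atom. If the (iid) `X_i` have an atom of mass
`1 - 1/γ` at `0` in coordinate `j₀`, and the `Y_i` are iid centered Gaussians with the
covariance of the `X_i`, nondegenerate in coordinate `j₀`, then
`μ(n^{-1/2} Σ X_i, n^{-1/2} Σ Y_i) ≥ (1/2)(1 - 1/γ)^n`. -/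
theorem atom_lower_bound {Ω : Type*} [MeasurableSpace Ω] (P : Measure Ω)
    [IsProbabilityMeasure P] {p n : ℕ} (hn : 0 < n) (j₀ : Fin p)
    (X Y : Fin n → Ω → (Fin p → ℝ)) (γ : ℝ) (hγ : 1 < γ)
    (hXm : ∀ i, Measurable (X i)) (hYm : ∀ i, Measurable (Y i))
    (hXindep : iIndepFun X P)
    (hYindep : iIndepFun Y P)
    (hXid : ∀ i, P.map (X i) = P.map (X ⟨0, hn⟩))
    (hXcentered : ∀ i j, ∫ ω, X i ω j ∂P = 0)
    (hatom : ∀ i, P {ω | X i ω j₀ = 0} = ENNReal.ofReal (1 - 1 / γ))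
    (S : Matrix (Fin p) (Fin p) ℝ)
    (hS : ∀ j k, S j k = ∫ ω, X ⟨0, hn⟩ ω j * X ⟨0, hn⟩ ω k ∂P)
    (hYgauss : ∀ i, IsCenteredGaussian (P.map (Y i)) S)
    (hSj₀ : 0 < S j₀ j₀) :
    (1 / 2) * (1 - 1 / γ) ^ n ≤
      rectDist P P (fun ω => (Real.sqrt n)⁻¹ • ∑ i, X i ω)
        (fun ω => (Real.sqrt n)⁻¹ • ∑ i, Y i ω) :=
  atom_lower_bound_general P hn j₀ X Y γ hγ hXm hYm hXindep hYindep hatom S hYgauss hSj₀
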